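/- Let x₁ < x₂, let g > 0, let B, h : [x₁, x₂] → ℝ be continuously differentiable with h(x) > 0 on [x₁, x₂], let σ : [x₁, x₂] × [0, ∞) → ℝ be continuous with continuous partial derivative ∂σ/∂x, and suppose the wetted area A(x) = ∫₀^{h(x)} σ(x, y) dy is positive on [x₁, x₂]. Let Q ∈ ℝ be a constant, and define I₁(x) = ∫₀^{h(x)} (h(x) − y)·σ(x, y) dy and I₂(x) = ∫₀^{h(x)} (h(x) − y)·(∂σ/∂x)(x, y) dy. If the steady frictionless momentum equation d/dx (Q²/A(x) + g·I₁(x)) = g·I₂(x) − g·A(x)·B′(x) holds on (x₁, x₂), then the energy E(x) = Q²/(2·A(x)²) + g·(h(x) + B(x)) is constant on [x₁, x₂]. -/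

import Mathlib

/-!
By the Leibniz rule, `A' = σ(x, h) h' + ∫₀^h ∂σ/∂x` and `I₁' = h' A + I₂`: the boundary term of
`I₁` vanishes because its integrand `(h - y) σ` is zero at `y = h`. Subtracting `g I₁'` from the
momentum equation leaves `(Q²/A)' = -g A (h' + B')`, and since `(Q²/(2A²))' = (Q²/A)' / A`, this
says exactly `E' = 0` on `(x₁, x₂)`. As `E` is continuous on `[x₁, x₂]`, it is constant there.
-/

open Set Filter Topology intervalIntegral Function ContinuousLinearMap
open scoped Interval

theorem eq_of_hasDerivAt_eq_zero {f : ℝ → ℝ} {a b : ℝ} (hf : ContinuousOn f (Icc a b))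
    (hderiv : ∀ x ∈ Ioo a b, HasDerivAt f 0 x) : ∀ x ∈ Icc a b, ∀ y ∈ Icc a b, f x = f y := by
  suffices ∀ x ∈ Icc a b, ∀ y ∈ Icc a b, x < y → f x = f y by
    intro x hx y hy
    rcases lt_trichotomy x y with hxy | rfl | hxy
    exacts [this x hx y hy hxy, rfl, (this y hy x hx hxy).symm]
  intro x hx y hy hxy
  obtain ⟨c, hc, hslope⟩ := exists_hasDerivAt_eq_slope f (fun _ => 0) hxy
    (hf.mono (Icc_subset_Icc hx.1 hy.2))
    (fun c hc => hderiv c ⟨hx.1.trans_lt hc.1, hc.2.trans_le hy.2⟩)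
  rw [eq_comm, div_eq_zero_iff, sub_eq_zero] at hslope
  exact (hslope.resolve_right (sub_ne_zero.mpr hxy.ne')).symm

theorem hasDerivAt_intervalIntegral_of_continuous {f f' : ℝ → ℝ → ℝ} {x₀ : ℝ} (a b : ℝ)
    (hf : Continuous ↿f) (hf' : Continuous ↿f')
    (hderiv : ∀ᶠ x in 𝓝 x₀, ∀ y, HasDerivAt (f · y) (f' x y) x) :
    HasDerivAt (fun x => ∫ y in a..b, f x y) (∫ y in a..b, f' x₀ y) x₀ := by
  obtain ⟨r, hr, hball⟩ := Metric.eventually_nhds_iff_ball.mp hderiv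
  obtain ⟨C, hC⟩ : ∃ C, ∀ p ∈ Metric.closedBall x₀ (r / 2) ×ˢ [[a, b]], ‖f' p.1 p.2‖ ≤ C :=
    ((isCompact_closedBall x₀ _).prod isCompact_uIcc).exists_bound_of_continuousOn
      hf'.continuousOn
  refine (hasDerivAt_integral_of_dominated_loc_of_deriv_le (bound := fun _ => C)
    (Metric.closedBall_mem_nhds x₀ (half_pos hr))
    (Eventually.of_forall fun x => (hf.uncurry_left x).aestronglyMeasurable)
    ((hf.uncurry_left x₀).intervalIntegrable a b)
    (hf'.uncurry_left x₀).aestronglyMeasurable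
    (MeasureTheory.ae_of_all _ fun y hy x hx => hC (x, y) ⟨hx, uIoc_subset_uIcc hy⟩)
    intervalIntegrable_const
    (MeasureTheory.ae_of_all _ fun y _ x hx =>
      hball x (Metric.closedBall_subset_ball (half_lt_self hr) hx) y)).2

theorem HasDerivAt.intervalIntegral_of_continuous {f f' : ℝ → ℝ → ℝ} {u : ℝ → ℝ}
    {u' x₀ : ℝ} (a : ℝ) (hf : Continuous ↿f) (hf' : Continuous ↿f')
    (hderiv : ∀ᶠ x in 𝓝 x₀, ∀ y, HasDerivAt (f · y) (f' x y) x) (hu : HasDerivAt u u' x₀) :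
    HasDerivAt (fun x => ∫ y in a..u x, f x y)
      (f x₀ (u x₀) * u' + ∫ y in a..u x₀, f' x₀ y) x₀ := by
  -- `(x, v) ↦ ∫ y in a..v, f x y` has continuous partial derivatives, so it is strictly
  -- differentiable and the chain rule applies along `x ↦ (x, u x)`.
  set Φ : ℝ → ℝ → ℝ := fun x v => ∫ y in a..v, f x y
  set Φ₁ : ℝ → ℝ → ℝ →L[ℝ] ℝ := fun x v => toSpanSingleton ℝ (∫ y in a..v, f' x y)
  set Φ₂ : ℝ → ℝ → ℝ →L[ℝ] ℝ := fun x v => toSpanSingleton ℝ (f x v)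
  have hΦ₁ : ∀ᶠ p in 𝓝 (x₀, u x₀), HasFDerivAt (Φ · p.2) (↿Φ₁ p) p.1 := by
    filter_upwards [continuous_fst.tendsto (x₀, u x₀) |>.eventually
      (eventually_eventually_nhds.mpr hderiv)] with p hp
    exact (hasDerivAt_intervalIntegral_of_continuous a p.2 hf hf' hp).hasFDerivAt
  have hΦ₂ : ∀ᶠ p in 𝓝 (x₀, u x₀), HasFDerivAt (Φ p.1 ·) (↿Φ₂ p) p.2 :=
    Eventually.of_forall fun p =>
      ((hf.uncurry_left p.1).integral_hasStrictDerivAt a p.2).hasDerivAt.hasFDerivAt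
  have hΦ := hasStrictFDerivAt_uncurry_coprod hΦ₁ hΦ₂
    (toSpanSingletonCLE.continuous.comp
      (continuous_parametric_primitive_of_continuous hf')).continuousAt
    (toSpanSingletonCLE.continuous.comp hf).continuousAt
  refine (hΦ.hasFDerivAt.comp_hasDerivAt x₀ ((hasDerivAt_id x₀).prodMk hu)).congr_deriv ?_
  simp [Φ₁, Φ₂, HasUncurry.uncurry, mul_comm, add_comm]

/-- Clamping extends data given on the strip `[x₁, x₂] × [0, ∞)` continuously to the plane,
without changing the `x`-derivatives at interior points of the strip. -/
def extendStrip (x₁ x₂ : ℝ) (f : ℝ → ℝ → ℝ) (x y : ℝ) : ℝ :=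
  f (max x₁ (min x₂ x)) (max y 0)

section extendStrip

variable {x₁ x₂ : ℝ} {f : ℝ → ℝ → ℝ}

theorem extendStrip_of_mem_Icc {x : ℝ} (hx : x ∈ Icc x₁ x₂) (y : ℝ) :
    extendStrip x₁ x₂ f x y = f x (max y 0) := by
  simp [extendStrip, hx.1, hx.2]

theorem continuous_extendStrip (h₁₂ : x₁ ≤ x₂) (hf : ContinuousOn ↿f (Icc x₁ x₂ ×ˢ Ici 0)) :
    Continuous ↿(extendStrip x₁ x₂ f) :=
  hf.comp_continuous (f := fun p : ℝ × ℝ => (max x₁ (min x₂ p.1), max p.2 0)) (by fun_prop)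
    fun _ => ⟨⟨le_max_left _ _, max_le h₁₂ (min_le_left _ _)⟩, mem_Ici.mpr (le_max_right _ _)⟩

theorem eventually_hasDerivAt_extendStrip {f' : ℝ → ℝ → ℝ}
    (hf : ∀ y ∈ Ici (0 : ℝ), ∀ x ∈ Icc x₁ x₂, HasDerivAt (f · y) (f' x y) x)
    {x₀ : ℝ} (hx₀ : x₀ ∈ Ioo x₁ x₂) :
    ∀ᶠ x in 𝓝 x₀, ∀ y, HasDerivAt (extendStrip x₁ x₂ f · y) (extendStrip x₁ x₂ f' x y) x := by
  filter_upwards [Ioo_mem_nhds hx₀.1 hx₀.2] with x hx y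
  rw [extendStrip_of_mem_Icc (Ioo_subset_Icc_self hx)]
  refine (hf _ (le_max_right y 0) x (Ioo_subset_Icc_self hx)).congr_of_eventuallyEq ?_
  filter_upwards [Ioo_mem_nhds hx.1 hx.2] with t ht
  exact extendStrip_of_mem_Icc (Ioo_subset_Icc_self ht) y

theorem integral_extendStrip {x v : ℝ} (hx : x ∈ Icc x₁ x₂) (hv : 0 ≤ v) (φ : ℝ → ℝ → ℝ) :
    ∫ y in (0 : ℝ)..v, φ y (extendStrip x₁ x₂ f x y) = ∫ y in (0 : ℝ)..v, φ y (f x y) := by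
  refine integral_congr fun y hy => ?_
  rw [uIcc_of_le hv] at hy
  simp only [extendStrip_of_mem_Icc hx, max_eq_left hy.1]

end extendStrip

theorem hasDerivAt_pressureForce {σ σ' : ℝ → ℝ → ℝ} {h : ℝ → ℝ} {h' x₀ : ℝ}
    (hσ : Continuous ↿σ) (hσ' : Continuous ↿σ')
    (hderiv : ∀ᶠ x in 𝓝 x₀, ∀ y, HasDerivAt (σ · y) (σ' x y) x) (hh : HasDerivAt h h' x₀) :
    HasDerivAt (fun x => ∫ y in (0 : ℝ)..h x, (h x - y) * σ x y)
      (h' * (∫ y in (0 : ℝ)..h x₀, σ x₀ y) + ∫ y in (0 : ℝ)..h x₀, (h x₀ - y) * σ' x₀ y) x₀ := by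
  -- Taking `h x` out of the integrand leaves integrands to which the Leibniz rule applies.
  have hsplit (f : ℝ → ℝ → ℝ) (hf : Continuous ↿f) (x : ℝ) :
      ∫ y in (0 : ℝ)..h x, (h x - y) * f x y =
        h x * (∫ y in (0 : ℝ)..h x, f x y) - ∫ y in (0 : ℝ)..h x, y * f x y := by
    rw [← integral_const_mul, ← integral_sub]
    · simp only [sub_mul]
    all_goals exact (by fun_prop : Continuous fun y => _).intervalIntegrable _ _
  have hmoment := hh.intervalIntegral_of_continuous (f := fun x y => y * σ x y)
    (f' := fun x y => y * σ' x y) 0 (by fun_prop) (by fun_prop)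
    (hderiv.mono fun x hx y => (hx y).const_mul y)
  rw [funext (hsplit σ hσ), hsplit σ' hσ']
  refine ((hh.fun_mul (hh.intervalIntegral_of_continuous 0 hσ hσ' hderiv)).fun_sub
    hmoment).congr_deriv ?_
  ring

theorem hasDerivAt_energy_eq_zero {A I₁ h B : ℝ → ℝ} {a' h' b' i₂ g Q x : ℝ}
    (hA : HasDerivAt A a' x) (hA₀ : A x ≠ 0) (hI₁ : HasDerivAt I₁ (h' * A x + i₂) x)
    (hh : HasDerivAt h h' x) (hB : HasDerivAt B b' x)
    (hmom : HasDerivAt (fun t => Q ^ 2 / A t + g * I₁ t) (g * i₂ - g * A x * b') x) :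
    HasDerivAt (fun t => Q ^ 2 / (2 * A t ^ 2) + g * (h t + B t)) 0 x := by
  have hkin : HasDerivAt (fun t => Q ^ 2 / A t) (-(g * A x * (h' + b'))) x := by
    have := hmom.fun_sub (hI₁.const_mul g)
    simp only [add_sub_cancel_right] at this
    exact this.congr_deriv (by ring)
  have hkin' : -(g * A x * (h' + b')) = -(Q ^ 2 * a') / A x ^ 2 :=
    hkin.unique (((hasDerivAt_const x (Q ^ 2)).fun_div hA hA₀).congr_deriv (by ring))
  have hE := ((hasDerivAt_const x (Q ^ 2)).fun_div ((hA.fun_pow 2).const_mul 2)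
    (by positivity)).fun_add ((hh.fun_add hB).const_mul g)
  refine hE.congr_deriv ?_
  norm_num
  field_simp at hkin' ⊢
  linear_combination -hkin'

theorem stmt8_general (x₁ x₂ : ℝ) (hx : x₁ < x₂) (g : ℝ)
    (B B' h h' : ℝ → ℝ)
    (hBd : ∀ x ∈ Set.Icc x₁ x₂, HasDerivAt B (B' x) x)
    (hhd : ∀ x ∈ Set.Icc x₁ x₂, HasDerivAt h (h' x) x)
    (hhpos : ∀ x ∈ Set.Icc x₁ x₂, 0 < h x)
    (σ σx : ℝ → ℝ → ℝ)
    (hσ : ContinuousOn (fun p : ℝ × ℝ => σ p.1 p.2) (Set.Icc x₁ x₂ ×ˢ Set.Ici 0))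
    (hσx : ∀ y ∈ Set.Ici (0 : ℝ), ∀ x ∈ Set.Icc x₁ x₂,
      HasDerivAt (fun t => σ t y) (σx x y) x)
    (hσxc : ContinuousOn (fun p : ℝ × ℝ => σx p.1 p.2) (Set.Icc x₁ x₂ ×ˢ Set.Ici 0))
    (A I₁ I₂ : ℝ → ℝ)
    (hA : ∀ x, A x = ∫ y in (0 : ℝ)..(h x), σ x y)
    (hApos : ∀ x ∈ Set.Icc x₁ x₂, 0 < A x)
    (hI₁ : ∀ x, I₁ x = ∫ y in (0 : ℝ)..(h x), (h x - y) * σ x y)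
    (hI₂ : ∀ x, I₂ x = ∫ y in (0 : ℝ)..(h x), (h x - y) * σx x y)
    (Q : ℝ)
    (hmom : ∀ x ∈ Set.Ioo x₁ x₂,
      HasDerivAt (fun t => Q ^ 2 / A t + g * I₁ t) (g * I₂ x - g * A x * B' x) x) :
    ∀ x ∈ Set.Icc x₁ x₂, ∀ y ∈ Set.Icc x₁ x₂,
      Q ^ 2 / (2 * A x ^ 2) + g * (h x + B x) = Q ^ 2 / (2 * A y ^ 2) + g * (h y + B y) := by
  set σ₀ := extendStrip x₁ x₂ σ
  set σx₀ := extendStrip x₁ x₂ σx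
  have hσ₀ : Continuous ↿σ₀ := continuous_extendStrip hx.le hσ
  have hσx₀ : Continuous ↿σx₀ := continuous_extendStrip hx.le hσxc
  have hA₀ : EqOn A (fun x => ∫ y in (0 : ℝ)..h x, σ₀ x y) (Icc x₁ x₂) := fun x hx =>
    (hA x).trans (integral_extendStrip hx (hhpos x hx).le fun _ s => s).symm
  have hI₁₀ : EqOn I₁ (fun x => ∫ y in (0 : ℝ)..h x, (h x - y) * σ₀ x y) (Icc x₁ x₂) :=
    fun x hx => (hI₁ x).trans
      (integral_extendStrip hx (hhpos x hx).le fun y s => (h x - y) * s).symm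
  have hI₂₀ : EqOn I₂ (fun x => ∫ y in (0 : ℝ)..h x, (h x - y) * σx₀ x y) (Icc x₁ x₂) :=
    fun x hx => (hI₂ x).trans
      (integral_extendStrip hx (hhpos x hx).le fun y s => (h x - y) * s).symm
  have hhc : ContinuousOn h (Icc x₁ x₂) := fun x hx => (hhd x hx).continuousAt.continuousWithinAt
  have hBc : ContinuousOn B (Icc x₁ x₂) := fun x hx => (hBd x hx).continuousAt.continuousWithinAt
  have hAc : ContinuousOn A (Icc x₁ x₂) :=
    ((continuous_parametric_primitive_of_continuous hσ₀).comp_continuousOn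
      (continuousOn_id.prodMk hhc)).congr hA₀
  refine eq_of_hasDerivAt_eq_zero (f := fun x => Q ^ 2 / (2 * A x ^ 2) + g * (h x + B x))
    ((continuousOn_const.div (continuousOn_const.mul (hAc.pow 2)) fun x hx =>
      mul_ne_zero two_ne_zero (pow_ne_zero 2 (hApos x hx).ne')).add
        (continuousOn_const.mul (hhc.add hBc)))
    fun x hx => ?_
  have hxI := Ioo_subset_Icc_self hx
  have hnhds := Icc_mem_nhds hx.1 hx.2
  have hσ₀d := eventually_hasDerivAt_extendStrip hσx hx
  have hI₁d : HasDerivAt I₁ (h' x * A x + I₂ x) x :=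
    ((hasDerivAt_pressureForce hσ₀ hσx₀ hσ₀d (hhd x hxI)).congr_of_eventuallyEq
      (hI₁₀.eventuallyEq_of_mem hnhds)).congr_deriv (by rw [hA₀ hxI, hI₂₀ hxI])
  exact hasDerivAt_energy_eq_zero (((hhd x hxI).intervalIntegral_of_continuous 0 hσ₀ hσx₀
    hσ₀d).congr_of_eventuallyEq (hA₀.eventuallyEq_of_mem hnhds)) (hApos x hxI).ne' hI₁d
    (hhd x hxI) (hBd x hxI) (hmom x hx)

/-- Energy conservation for smooth steady frictionless flow: if the steady momentum
equation `d/dx (Q²/A + g I₁) = g I₂ - g A B'` holds on `(x₁, x₂)`, with positive depth and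
wetted area, then the energy `E = Q²/(2A²) + g (h + B)` is constant on `[x₁, x₂]`. -/
theorem stmt8 (x₁ x₂ : ℝ) (hx : x₁ < x₂) (g : ℝ) (hg : 0 < g)
    (B B' h h' : ℝ → ℝ)
    (hBd : ∀ x ∈ Set.Icc x₁ x₂, HasDerivAt B (B' x) x)
    (hB' : ContinuousOn B' (Set.Icc x₁ x₂))
    (hhd : ∀ x ∈ Set.Icc x₁ x₂, HasDerivAt h (h' x) x)
    (hh' : ContinuousOn h' (Set.Icc x₁ x₂))
    (hhpos : ∀ x ∈ Set.Icc x₁ x₂, 0 < h x)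
    (σ σx : ℝ → ℝ → ℝ)
    (hσ : ContinuousOn (fun p : ℝ × ℝ => σ p.1 p.2) (Set.Icc x₁ x₂ ×ˢ Set.Ici 0))
    (hσx : ∀ y ∈ Set.Ici (0 : ℝ), ∀ x ∈ Set.Icc x₁ x₂,
      HasDerivAt (fun t => σ t y) (σx x y) x)
    (hσxc : ContinuousOn (fun p : ℝ × ℝ => σx p.1 p.2) (Set.Icc x₁ x₂ ×ˢ Set.Ici 0))
    (A I₁ I₂ : ℝ → ℝ)
    (hA : ∀ x, A x = ∫ y in (0 : ℝ)..(h x), σ x y)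
    (hApos : ∀ x ∈ Set.Icc x₁ x₂, 0 < A x)
    (hI₁ : ∀ x, I₁ x = ∫ y in (0 : ℝ)..(h x), (h x - y) * σ x y)
    (hI₂ : ∀ x, I₂ x = ∫ y in (0 : ℝ)..(h x), (h x - y) * σx x y)
    (Q : ℝ)
    (hmom : ∀ x ∈ Set.Ioo x₁ x₂,
      HasDerivAt (fun t => Q ^ 2 / A t + g * I₁ t) (g * I₂ x - g * A x * B' x) x) :
    ∀ x ∈ Set.Icc x₁ x₂, ∀ y ∈ Set.Icc x₁ x₂,
      Q ^ 2 / (2 * A x ^ 2) + g * (h x + B x) = Q ^ 2 / (2 * A y ^ 2) + g * (h y + B y) :=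
  stmt8_general x₁ x₂ hx g B B' h h' hBd hhd hhpos σ σx hσ hσx hσxc A I₁ I₂ hA hApos hI₁ hI₂ Q hmom
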